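/- arXiv:2604.00351 — 2 statements merged into one kernel-verified Lean document; each statement's English description precedes it below -/
import Mathlib

section
/- Let z₁, z₂ ∈ ℂ satisfy 1 ≤ Re(z₁) < Re(z₂), Im(z₁) = 1, and |Im(z₂)| ≤ 1, and assume that F(z₁, z₂) ∩ {u ∈ ℂ : |u| ≤ 1} = ∅. Then there exist c ∈ ℂ and r > 0 such that the closed disc F = {u ∈ ℂ : |u − c| ≤ r} satisfies z₁ ∈ F, z₂ ∈ F, F ∩ {u ∈ ℂ : |u| ≤ 1} = ∅, and F ⊆ {z ∈ ℂ : Im(z) ≥ −1}. -/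
open OnePoint Set

noncomputable section

/-- The set Ω = {z : |z-1| < 2} ∪ {z : |z+1| < 2}. -/
def OmegaSet : Set ℂ := {z | ‖z - 1‖ < 2} ∪ {z | ‖z + 1‖ < 2}

/-- A three-element set `E ⊆ ℂ` is distinguished if it misses `Ω` and its points are
pairwise at distance at least 2. -/
def Distinguished (E : Set ℂ) : Prop :=
  E.ncard = 3 ∧ E ∩ OmegaSet = ∅ ∧
    ∀ z ∈ E, ∀ w ∈ E, z ≠ w → 2 ≤ ‖z - w‖

/-- The closed half-strip Σ = {z : Re z ≥ 0, |Im z| ≤ 1}. -/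
def HalfStrip : Set ℂ := {z | 0 ≤ z.re ∧ |z.im| ≤ 1}

/-- Two complex numbers are approximately collinear if some rotation puts both in Σ. -/
def ApproxCollinear (z w : ℂ) : Prop :=
  ∃ a : ℂ, ‖a‖ = 1 ∧ z / a ∈ HalfStrip ∧ w / a ∈ HalfStrip

/-- A set `E ⊆ ℂ` is splittable by a strip. -/
def SplittableByStrip (E : Set ℂ) : Prop :=
  ∃ a : ℂ, ‖a‖ = 1 ∧ (∀ z ∈ E, 1 < |(z / a).im|) ∧
    ∃ z ∈ E, ∃ w ∈ E, 1 < (z / a).im ∧ (w / a).im < -1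

/-- `DiamDisc z w` is the closed disc having `z` and `w` as endpoints of a diameter. -/
def DiamDisc (z w : ℂ) : Set ℂ :=
  {u | ‖u - (z + w) / 2‖ ≤ ‖z - w‖ / 2}

/-- A three-element set is well-separated from zero if `F(z,w)` misses the closed unit
disc for every pair of approximately collinear points `z, w ∈ E`. -/
def WellSeparatedFromZero (E : Set ℂ) : Prop :=
  ∀ z ∈ E, ∀ w ∈ E, ApproxCollinear z w →
    DiamDisc z w ∩ {u : ℂ | ‖u‖ ≤ 1} = ∅

/-- A closed disc in the Riemann sphere `ℂ ∪ {∞}`. -/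
def IsClosedDisc (D : Set (OnePoint ℂ)) : Prop :=
  (∃ c : ℂ, ∃ r : ℝ, 0 < r ∧
      D = (fun z : ℂ => (z : OnePoint ℂ)) '' {z | ‖z - c‖ ≤ r}) ∨
  (∃ c : ℂ, ∃ r : ℝ, 0 < r ∧
      D = {∞} ∪ (fun z : ℂ => (z : OnePoint ℂ)) '' {z | r ≤ ‖z - c‖}) ∨
  (∃ a : ℂ, a ≠ 0 ∧ ∃ t : ℝ,
      D = {∞} ∪ (fun z : ℂ => (z : OnePoint ℂ)) '' {z | t ≤ (z * (starRingEnd ℂ) a).re})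

/-- A set `A` in the Riemann sphere is splittable if three pairwise disjoint closed
discs each contain exactly two points of `A`. -/
def Splittable (A : Set (OnePoint ℂ)) : Prop :=
  ∃ D₁ D₂ D₃ : Set (OnePoint ℂ),
    IsClosedDisc D₁ ∧ IsClosedDisc D₂ ∧ IsClosedDisc D₃ ∧
    Disjoint D₁ D₂ ∧ Disjoint D₁ D₃ ∧ Disjoint D₂ D₃ ∧
    (D₁ ∩ A).ncard = 2 ∧ (D₂ ∩ A).ncard = 2 ∧ (D₃ ∩ A).ncard = 2



lemma key1' (x₁ x₂ y D : ℝ) (hx₁ : 1 ≤ x₁) (hx : x₁ < x₂) (hy1 : y < 1)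
    (hDpos : 0 < D) (hD2 : D^2 = (x₂-x₁)^2 + (1-y)^2)
    (H : (D+2)^2 < (x₁+x₂)^2 + (1+y)^2) :
    ((x₂-x₁)^2+(1-y)^2 + 2*(1-y))^2
      < x₂^2*(2*(1-y))^2 + ((1+y)*(1-y) + (x₂-x₁)^2)^2 := by
  have hapos : 0 < x₂ - x₁ := by linarith
  have hbpos : 0 < 1 - y := by linarith
  have hDab : D ≤ (x₂-x₁) + (1-y) := by nlinarith [mul_pos hapos hbpos]
  have hmn2 : 2*D ≤ (x₁+x₂)*(1-y) + (1+y)*(x₂-x₁) := by nlinarith [mul_pos hapos hbpos]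
  have P1 : 0 ≤ 2*(x₂-x₁)*(1-y)*((x₁+x₂)*(1-y) + (1+y)*(x₂-x₁) - 2*D) := by
    apply mul_nonneg (by positivity); linarith
  have P2 : 0 < (1-y)^2 * ((x₁+x₂)^2 + (1+y)^2 - ((x₂-x₁)^2+(1-y)^2) - 4 - 4*D) := by
    apply mul_pos (by positivity); nlinarith
  have P3 : 0 ≤ 4*(1-y)*D*((x₂-x₁) + (1-y) - D) := by
    apply mul_nonneg (by positivity); linarith
  have h4 : 4*(1-y)*(D^2 - ((x₂-x₁)^2+(1-y)^2)) = 0 := by rw [hD2]; ring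
  have E : x₂^2*(2*(1-y))^2 + ((1+y)*(1-y) + (x₂-x₁)^2)^2
      - ((x₂-x₁)^2+(1-y)^2 + 2*(1-y))^2
      = 2*(x₂-x₁)*(1-y)*((x₁+x₂)*(1-y) + (1+y)*(x₂-x₁) - 2*D)
        + (1-y)^2 * ((x₁+x₂)^2 + (1+y)^2 - ((x₂-x₁)^2+(1-y)^2) - 4 - 4*D)
        + 4*(1-y)*D*((x₂-x₁) + (1-y) - D)
        + 4*(1-y)*(D^2 - ((x₂-x₁)^2+(1-y)^2)) := by ring
  linarith [P1, P2, P3, h4, E]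

lemma suff' (z₁ z₂ c : ℂ) (r : ℝ) (hr : 0 < r)
    (m1 : ‖z₁ - c‖ ≤ r) (m2 : ‖z₂ - c‖ ≤ r)
    (hfar : r + 1 < ‖c‖) (hlow : -1 ≤ c.im - r) :
    ∃ (c' : ℂ) (r' : ℝ), 0 < r' ∧
      z₁ ∈ {u : ℂ | ‖u - c'‖ ≤ r'} ∧
      z₂ ∈ {u : ℂ | ‖u - c'‖ ≤ r'} ∧
      {u : ℂ | ‖u - c'‖ ≤ r'} ∩ {u : ℂ | ‖u‖ ≤ 1} = ∅ ∧
      {u : ℂ | ‖u - c'‖ ≤ r'} ⊆ {z : ℂ | -1 ≤ z.im} := by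
  refine ⟨c, r, hr, m1, m2, ?_, ?_⟩
  · ext u
    simp only [Set.mem_inter_iff, Set.mem_setOf_eq, Set.mem_empty_iff_false, iff_false]
    rintro ⟨hu1, hu2⟩
    have : ‖c‖ ≤ ‖u - c‖ + ‖u‖ := by
      calc ‖c‖ = ‖(c - u) + u‖ := by ring_nf
        _ ≤ ‖c - u‖ + ‖u‖ := norm_add_le _ _
        _ = ‖u - c‖ + ‖u‖ := by
            rw [norm_sub_rev c u]
    linarith
  · intro u hu
    simp only [Set.mem_setOf_eq] at hu ⊢
    have h1 : |(u - c).im| ≤ r := le_trans (Complex.abs_im_le_norm _) hu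
    rw [Complex.sub_im, abs_le] at h1
    linarith [h1.1]

lemma extractH' (z₁ z₂ : ℂ)
    (hdisj : DiamDisc z₁ z₂ ∩ {u : ℂ | ‖u‖ ≤ 1} = ∅) :
    ‖z₁ - z₂‖ + 2 < ‖z₁ + z₂‖ := by
  set m : ℂ := (z₁ + z₂) / 2 with hm
  set d : ℝ := ‖z₁ - z₂‖ / 2 with hd
  have hd0 : 0 ≤ d := by positivity
  have hne : ∀ u : ℂ, ‖u - m‖ ≤ d → 1 < ‖u‖ := by
    intro u hu
    by_contra h
    push_neg at h
    have : u ∈ DiamDisc z₁ z₂ ∩ {u : ℂ | ‖u‖ ≤ 1} := ⟨hu, h⟩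
    rw [hdisj] at this
    exact this
  have h0 : d < ‖m‖ := by
    by_contra h
    push_neg at h
    have := hne 0 (by simpa using h)
    simp only [norm_zero] at this; linarith
  have hmpos : 0 < ‖m‖ := lt_of_le_of_lt hd0 h0
  set u0 : ℂ := ((1 - d / ‖m‖ : ℝ) : ℂ) * m with hu0
  have habs : ‖u0 - m‖ = d := by
    have : u0 - m = ((-(d / ‖m‖) : ℝ) : ℂ) * m := by
      rw [hu0]; push_cast; ring
    rw [this, norm_mul, Complex.norm_real, Real.norm_eq_abs, abs_neg, abs_div, abs_of_nonneg hd0,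
      abs_norm, div_mul_cancel₀ _ (ne_of_gt hmpos)]
  have hu0abs : ‖u0‖ = ‖m‖ - d := by
    rw [hu0, norm_mul, Complex.norm_real, Real.norm_eq_abs, abs_of_nonneg (by
      rw [sub_nonneg, div_le_one hmpos]; exact h0.le)]
    field_simp
  have := hne u0 (le_of_eq habs)
  rw [hu0abs] at this
  have h2m : ‖z₁ + z₂‖ = 2 * ‖m‖ := by
    rw [hm]; rw [norm_div]; simp [Complex.norm_two]; ring
  have h2d : ‖z₁ - z₂‖ = 2 * d := by rw [hd]; ring
  rw [h2m, h2d]; linarith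


lemma key2' (x₁ x₂ r w : ℝ) (hw : 0 ≤ w)
    (hr2 : r^2 = (x₂-x₁)^2/4 + w^2) (hrle : r ≤ (x₂-x₁)/2 + w)
    (Hsq : ((x₂-x₁)+2)^2 < (x₁+x₂)^2 + 4) :
    (r+1)^2 < ((x₁+x₂)/2)^2 + (1+w)^2 := by nlinarith [hr2, hrle, Hsq]

set_option maxHeartbeats 1000000 in
theorem deformed_disc_exists (z₁ z₂ : ℂ)
    (h₁ : 1 ≤ z₁.re) (h₂ : z₁.re < z₂.re) (h₃ : z₁.im = 1) (h₄ : |z₂.im| ≤ 1)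
    (hdisj : DiamDisc z₁ z₂ ∩ {u : ℂ | ‖u‖ ≤ 1} = ∅) :
    ∃ (c : ℂ) (r : ℝ), 0 < r ∧
      z₁ ∈ {u : ℂ | ‖u - c‖ ≤ r} ∧
      z₂ ∈ {u : ℂ | ‖u - c‖ ≤ r} ∧
      {u : ℂ | ‖u - c‖ ≤ r} ∩ {u : ℂ | ‖u‖ ≤ 1} = ∅ ∧
      {u : ℂ | ‖u - c‖ ≤ r} ⊆ {z : ℂ | -1 ≤ z.im} := by
  obtain ⟨hy1, hy2⟩ := abs_le.mp h₄
  have H := extractH' z₁ z₂ hdisj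
  rcases eq_or_lt_of_le hy2 with hy | hy
  · -- case z₂.im = 1
    have hz12 : z₁ - z₂ = ((z₁.re - z₂.re : ℝ) : ℂ) := by
      apply Complex.ext <;> simp [h₃, hy]
    have hDval : ‖z₁ - z₂‖ = z₂.re - z₁.re := by
      rw [hz12, Complex.norm_real, Real.norm_eq_abs, abs_of_nonpos (by linarith)]; ring
    have habs2 : (‖z₁ + z₂‖)^2 = (z₁.re + z₂.re)^2 + 4 := by
      rw [Complex.sq_norm, Complex.normSq_apply, Complex.add_re, Complex.add_im, h₃, hy]
      ring
    have Hsq : ((z₂.re - z₁.re) + 2)^2 < (z₁.re + z₂.re)^2 + 4 := by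
      rw [hDval] at H
      nlinarith [norm_nonneg (z₁ + z₂), H]
    have hapos : (0:ℝ) < z₂.re - z₁.re := by linarith
    obtain ⟨w, hwdef⟩ : ∃ w : ℝ, w = (z₂.re - z₁.re)^2/4 := ⟨_, rfl⟩
    have hwpos : 0 < w := by rw [hwdef]; positivity
    obtain ⟨r, hrdef⟩ : ∃ r : ℝ, r = Real.sqrt ((z₂.re - z₁.re)^2/4 + w^2) := ⟨_, rfl⟩
    have hr2 : r^2 = (z₂.re - z₁.re)^2/4 + w^2 := by
      rw [hrdef]; exact Real.sq_sqrt (by positivity)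
    have hrpos : 0 < r := by rw [hrdef]; exact Real.sqrt_pos.mpr (by positivity)
    obtain ⟨c, hcdef⟩ : ∃ c : ℂ, c = (⟨(z₁.re + z₂.re)/2, 1 + w⟩ : ℂ) := ⟨_, rfl⟩
    have hcre : c.re = (z₁.re + z₂.re)/2 := by rw [hcdef]
    have hcim : c.im = 1 + w := by rw [hcdef]
    have hrle : r ≤ (z₂.re - z₁.re)/2 + w := by
      rw [hrdef, show (z₂.re - z₁.re)/2 + w = Real.sqrt (((z₂.re - z₁.re)/2 + w)^2) from
        (Real.sqrt_sq (by positivity)).symm]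
      apply Real.sqrt_le_sqrt
      nlinarith [mul_pos hapos hwpos]
    have hrle2 : r ≤ w + 2 := by
      rw [hrdef, show w + 2 = Real.sqrt ((w + 2)^2) from
        (Real.sqrt_sq (by positivity)).symm]
      apply Real.sqrt_le_sqrt
      nlinarith [sq_nonneg (z₂.re - z₁.re), hwdef]
    have m1 : ‖z₁ - c‖ ≤ r := by
      have he : (‖z₁ - c‖)^2 = r^2 := by
        rw [Complex.sq_norm, Complex.normSq_apply, Complex.sub_re, Complex.sub_im,
          hcre, hcim, h₃, hr2]
        ring
      exact le_of_pow_le_pow_left₀ two_ne_zero hrpos.le (le_of_eq he)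
    have m2 : ‖z₂ - c‖ ≤ r := by
      have he : (‖z₂ - c‖)^2 = r^2 := by
        rw [Complex.sq_norm, Complex.normSq_apply, Complex.sub_re, Complex.sub_im,
          hcre, hcim, hy, hr2]
        ring
      exact le_of_pow_le_pow_left₀ two_ne_zero hrpos.le (le_of_eq he)
    have hfar : r + 1 < ‖c‖ := by
      have hc2 : (‖c‖)^2 = ((z₁.re + z₂.re)/2)^2 + (1+w)^2 := by
        rw [Complex.sq_norm, Complex.normSq_apply, hcre, hcim]; ring
      have hsq : (r + 1)^2 < (‖c‖)^2 := by
        rw [hc2]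
        exact key2' z₁.re z₂.re r w hwpos.le hr2 hrle Hsq
      exact lt_of_pow_lt_pow_left₀ 2 (norm_nonneg c) hsq
    have hlow : -1 ≤ c.im - r := by rw [hcim]; linarith
    exact suff' z₁ z₂ c r hrpos m1 m2 hfar hlow
  · -- case z₂.im < 1
    have hapos : (0:ℝ) < z₂.re - z₁.re := by linarith
    have hbpos : (0:ℝ) < 1 - z₂.im := by linarith
    obtain ⟨D, hDdef⟩ : ∃ D : ℝ, D = ‖z₁ - z₂‖ := ⟨_, rfl⟩
    have hD2 : D^2 = (z₂.re - z₁.re)^2 + (1 - z₂.im)^2 := by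
      rw [hDdef, Complex.sq_norm, Complex.normSq_apply, Complex.sub_re, Complex.sub_im, h₃]
      ring
    have hDnn : 0 ≤ D := by rw [hDdef]; exact norm_nonneg _
    have hDpos : 0 < D := by
      rcases hDnn.lt_or_eq with h | h
      · exact h
      · exfalso; rw [← h] at hD2; nlinarith
    have habs2 : (‖z₁ + z₂‖)^2 = (z₁.re + z₂.re)^2 + (1 + z₂.im)^2 := by
      rw [Complex.sq_norm, Complex.normSq_apply, Complex.add_re, Complex.add_im, h₃]
      ring
    have Hsq : (D + 2)^2 < (z₁.re + z₂.re)^2 + (1 + z₂.im)^2 := by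
      rw [← hDdef] at H
      nlinarith [norm_nonneg (z₁ + z₂), H, hDpos]
    have key := key1' z₁.re z₂.re z₂.im D h₁ h₂ hy hDpos hD2 Hsq
    obtain ⟨r, hrdef⟩ : ∃ r : ℝ,
        r = ((z₂.re - z₁.re)^2 + (1 - z₂.im)^2)/(2*(1 - z₂.im)) := ⟨_, rfl⟩
    have hrpos : 0 < r := by rw [hrdef]; positivity
    obtain ⟨c, hcdef⟩ : ∃ c : ℂ,
        c = (⟨z₂.re, (1 + z₂.im)/2 + (z₂.re - z₁.re)^2/(2*(1 - z₂.im))⟩ : ℂ) := ⟨_, rfl⟩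
    have hcre : c.re = z₂.re := by rw [hcdef]
    have hcim : c.im = (1 + z₂.im)/2 + (z₂.re - z₁.re)^2/(2*(1 - z₂.im)) := by rw [hcdef]
    have m1 : ‖z₁ - c‖ ≤ r := by
      have he : (‖z₁ - c‖)^2 = r^2 := by
        rw [Complex.sq_norm, Complex.normSq_apply, Complex.sub_re, Complex.sub_im,
          hcre, hcim, h₃, hrdef]
        field_simp
        ring
      exact le_of_pow_le_pow_left₀ two_ne_zero hrpos.le (le_of_eq he)
    have m2 : ‖z₂ - c‖ ≤ r := by
      have he : (‖z₂ - c‖)^2 = r^2 := by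
        rw [Complex.sq_norm, Complex.normSq_apply, Complex.sub_re, Complex.sub_im,
          hcre, hcim, hrdef]
        field_simp
        ring
      exact le_of_pow_le_pow_left₀ two_ne_zero hrpos.le (le_of_eq he)
    have hfar : r + 1 < ‖c‖ := by
      have hc2 : (‖c‖)^2
          = z₂.re^2 + ((1 + z₂.im)/2 + (z₂.re - z₁.re)^2/(2*(1 - z₂.im)))^2 := by
        rw [Complex.sq_norm, Complex.normSq_apply, hcre, hcim]; ring
      have hsq : (r + 1)^2 < (‖c‖)^2 := by
        rw [hc2, hrdef]
        rw [show ((z₂.re - z₁.re)^2 + (1 - z₂.im)^2)/(2*(1 - z₂.im)) + 1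
              = ((z₂.re - z₁.re)^2 + (1 - z₂.im)^2 + 2*(1 - z₂.im))/(2*(1 - z₂.im)) by
            field_simp,
          show (1 + z₂.im)/2 + (z₂.re - z₁.re)^2/(2*(1 - z₂.im))
              = ((1 + z₂.im)*(1 - z₂.im) + (z₂.re - z₁.re)^2)/(2*(1 - z₂.im)) by
            field_simp,
          div_pow, div_pow, div_lt_iff₀ (by positivity), add_mul,
          div_mul_cancel₀ _ (by positivity : ((2:ℝ)*(1 - z₂.im))^2 ≠ 0)]
        linarith [key]
      exact lt_of_pow_lt_pow_left₀ 2 (norm_nonneg c) hsq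
    have hlow : -1 ≤ c.im - r := by
      have hcr : c.im - r = z₂.im := by
        rw [hcim, hrdef]; field_simp; ring
      rw [hcr]; exact hy1
    exact suff' z₁ z₂ c r hrpos m1 m2 hfar hlow
end
end

section
/- Let z₁, z₂ ∈ ℂ \ Ω be approximately collinear points such that F(z₁, z₂) ∩ {u ∈ ℂ : |u| ≤ 1} ≠ ∅ and |z₁| ≤ |z₂|. Then: (i) |z₁| ≤ √5; (ii) |z₁ − z₂| ≤ 2√2; (iii) if |z₁ − z₂| = 2√2 then z₁ = √3·i or z₁ = −√3·i; (iv) either Im(z₁) > 0 and Im(z₂) > 0, or Im(z₁) < 0 and Im(z₂) < 0. -/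
open OnePoint Set

noncomputable section

set_option maxHeartbeats 1000000

private lemma frame_part2_caseA (x1 y1 x2 y2 s t r : ℝ) (hr : r^2 = 2) (hr1 : 1 < r)
    (hx1 : r ≤ x1) (hx2 : r ≤ x2) (hy1 : y1^2 ≤ 1) (hy2 : y2^2 ≤ 1)
    (hst : s^2 + t^2 ≤ 1)
    (hE : (x1 - s) * (x2 - s) ≤ 1 - t^2)
    (hAM : (x1 - s) * (x2 - s) ≤ (y1 - y2)^2 / 4)
    (hAB : x1 ≤ x2) :
    (x1 - x2)^2 + (y1 - y2)^2 + (x1^2 + y1^2) ≤ 11 := by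
  have hs1 : s ≤ 1 := by nlinarith [sq_nonneg s, sq_nonneg t, sq_nonneg (s-1)]
  set M := (y1 - y2)^2 / 4 with hM
  have hM0 : 0 ≤ M := by positivity
  have hm1 : M ≤ 1 := by
    simp only [hM]
    nlinarith [sq_nonneg (y1 + y2)]
  set c := x1 - s with hc
  set g := x2 - x1 with hg
  have hcpos : 0 < c := by simp only [hc]; nlinarith
  have hcc : c * c ≤ 1 - t^2 :=
    le_trans (mul_le_mul_of_nonneg_left (by linarith : x1 - s ≤ x2 - s) (le_of_lt hcpos)) hE
  have hc1 : c ≤ 1 := by nlinarith [sq_nonneg t]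
  have hClow : r - 1 ≤ c := by simp only [hc]; linarith
  have hgc : g * c ≤ M - c^2 := by
    have : c * (x2 - s) = g*c + c^2 := by simp only [hg, hc]; ring
    linarith [hAM]
  have hg0 : 0 ≤ g := by simp only [hg]; linarith
  have hcr : r ≤ c + 1 := by linarith
  have hc2c : 1 - c^2 ≤ 2*c := by nlinarith [mul_self_le_mul_self (by linarith : (0:ℝ) ≤ r) hcr]
  have hg2 : g ≤ 2 := by
    have h2 : g * c ≤ 2 * c := by linarith
    exact le_of_mul_le_mul_right h2 hcpos
  have hcub : c^3 - 5*c + 2 ≤ 0 := by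
    nlinarith [mul_nonneg (by linarith : (0:ℝ) ≤ c - (r-1)) (by nlinarith : (0:ℝ) ≤ 5 - (c^2 + (r-1)*c + (r-1)^2))]
  have e1 : (0:ℝ) ≤ (1 - M) * (2 + 4*c) := mul_nonneg (by linarith) (by linarith)
  have hsm1 : -1 ≤ s := by nlinarith [sq_nonneg (s+1), sq_nonneg t]
  have e2' : (0:ℝ) ≤ (1 - s) * (2*c + 1 + s) := mul_nonneg (by linarith) (by linarith)
  have e2 : (0:ℝ) ≤ c * ((c+1)^2 - (c+s)^2) :=
    mul_nonneg (le_of_lt hcpos) (by linarith [e2'])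
  have hPhi : 2*M - 2*c^2 + 4*M*c + c*(c+s)^2 - 10*c ≤ 0 := by linarith [e1, e2, hcub]
  have hgsq : g^2 ≤ 2*g := by nlinarith [mul_nonneg hg0 (by linarith : (0:ℝ) ≤ 2 - g)]
  have f1 : g^2 * c ≤ (2*g) * c := mul_le_mul_of_nonneg_right hgsq (le_of_lt hcpos)
  have f3 : c * y1^2 ≤ c * 1 := mul_le_mul_of_nonneg_left hy1 (le_of_lt hcpos)
  have f2 : (2*g)*c ≤ 2*M - 2*c^2 := by linarith
  have hfin : (g^2 + 4*M + ((c+s)^2 + y1^2) - 11) * c ≤ 0 := by linarith [f1, f2, f3, hPhi]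
  have hfin2 : g^2 + 4*M + ((c+s)^2 + y1^2) - 11 ≤ 0 := by
    by_contra hcon
    push_neg at hcon
    nlinarith [mul_pos hcon hcpos]
  have hxg : (x1 - x2)^2 = g^2 := by simp only [hg]; ring
  have hM4 : (y1 - y2)^2 = 4*M := by simp only [hM]; ring
  have hx1cs : x1 = c + s := by simp only [hc]; ring
  rw [hxg, hM4, hx1cs]
  linarith

private lemma le_of_sq' (a b : ℝ) (hb : 0 ≤ b) (h : a^2 ≤ b^2) : a ≤ b := by
  nlinarith [sq_nonneg (a - b), sq_nonneg (a + b)]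

private lemma key_y (y1 y2 t : ℝ) (h1 : y1^2 ≤ 1) (h2 : y2^2 ≤ 1) (ht : t^2 ≤ 1) :
    t^2 - 1 ≤ (y1 - t) * (y2 - t) := by
  nlinarith [mul_nonneg (mul_nonneg (by nlinarith : (0:ℝ) ≤ 1 - t) (by nlinarith : (0:ℝ) ≤ 1 + y1)) (by nlinarith : (0:ℝ) ≤ 1 + y2),
             mul_nonneg (mul_nonneg (by nlinarith : (0:ℝ) ≤ 1 + t) (by nlinarith : (0:ℝ) ≤ 1 - y1)) (by nlinarith : (0:ℝ) ≤ 1 - y2)]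

private lemma frame_min2 (x1 x2 s t : ℝ)
    (hst : s^2 + t^2 ≤ 1)
    (hE : (x1 - s) * (x2 - s) ≤ 1 - t^2) :
    x1 ≤ 2 ∨ x2 ≤ 2 := by
  by_contra h
  push_neg at h
  obtain ⟨h1, h2⟩ := h
  have hs1 : s ≤ 1 := by nlinarith [sq_nonneg (s-1), sq_nonneg t]
  have hlt : (2 - s) * (2 - s) < (x1 - s) * (x2 - s) := by nlinarith
  nlinarith [sq_nonneg (1 - s)]

private lemma prod_bound (x1 x2 s t r : ℝ) (hr : r^2 = 2) (hr1 : 1 < r)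
    (hx1 : r ≤ x1) (hx2 : r ≤ x2) (hst : s^2 + t^2 ≤ 1)
    (hE : (x1 - s) * (x2 - s) ≤ 1 - t^2) :
    x1 * x2 ≤ 2*r + 2 := by
  have hs1 : s ≤ 1 := by nlinarith [sq_nonneg (s-1), sq_nonneg t]
  have h1 : r * (x1 + x2) ≤ x1 * x2 + 2 := by
    nlinarith [mul_nonneg (by linarith : (0:ℝ) ≤ x1 - r) (by linarith : (0:ℝ) ≤ x2 - r)]
  have hP2 : 2 ≤ x1 * x2 := by nlinarith
  rcases le_or_gt s 0 with hs | hs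
  · nlinarith
  · have h2 : s * (r * (x1+x2)) ≤ s * (x1*x2+2) :=
      mul_le_mul_of_nonneg_left h1 (le_of_lt hs)
    have h3 : (1 - s) * ((x1*x2+2) - r*(1+s)) ≥ 0 := by
      apply mul_nonneg (by linarith); nlinarith
    have h4 : r * (x1*x2) ≤ x1*x2 + 2 := by
      nlinarith [sq_nonneg t, mul_nonneg (by linarith : (0:ℝ) ≤ r) (sq_nonneg t)]
    nlinarith

private lemma frame_part3 (x1 y1 x2 y2 s t r : ℝ) (hr : r^2 = 2) (hr1 : 1 < r)
    (hx1 : r ≤ x1) (hx2 : r ≤ x2) (hy1 : y1^2 ≤ 1) (hy2 : y2^2 ≤ 1)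
    (hd1 : 3 ≤ x1^2 + y1^2) (hd2 : 3 ≤ x2^2 + y2^2)
    (hst : s^2 + t^2 ≤ 1)
    (hE : (x1 - s) * (x2 - s) ≤ 1 - t^2) :
    4 + (x1^2 + y1^2 - 3) * (x2^2 + y2^2 - 3) ≤ 4 * (x1*x2 + y1*y2) := by
  have hP6 := prod_bound x1 x2 s t r hr hr1 hx1 hx2 hst hE
  have hP2 : 2 ≤ x1 * x2 := by nlinarith
  have hP6' : x1 * x2 ≤ 6 := by nlinarith
  have hAM : (x1^2 - 2) * (x2^2 - 2) ≤ (x1*x2 - 2)^2 := by nlinarith [sq_nonneg (x1 - x2)]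
  have hfac : (x1^2 + y1^2 - 3) * (x2^2 + y2^2 - 3) ≤ (x1^2 - 2) * (x2^2 - 2) := by
    nlinarith [mul_nonneg (by nlinarith : (0:ℝ) ≤ x1^2 + y1^2 - 3) (by nlinarith : (0:ℝ) ≤ 1 - y2^2),
               mul_nonneg (by nlinarith : (0:ℝ) ≤ 1 - y1^2) (by nlinarith : (0:ℝ) ≤ x2^2 - 2)]
  nlinarith [mul_nonneg (by nlinarith : (0:ℝ) ≤ x1*x2 - 2) (by nlinarith : (0:ℝ) ≤ 6 - x1*x2)]

private lemma frame_part2_caseB (x1 y1 x2 y2 r : ℝ) (hr : r^2 = 2) (hr1 : 1 < r)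
    (hx1 : r ≤ x1) (hx2 : r ≤ x2) (hy1 : y1^2 ≤ 1) (hy2 : y2^2 ≤ 1)
    (hord : x1^2 + y1^2 ≤ x2^2 + y2^2)
    (hpart1 : x1^2 + y1^2 ≤ 5)
    (hBA : x2 < x1) :
    (x1 - x2)^2 + (y1 - y2)^2 + (x1^2 + y1^2) ≤ 11 := by
  have h1 : (x1 - x2) * (x1 + x2) ≤ 1 := by nlinarith
  have hD : 0 < x1 - x2 := by linarith
  have hS : 2*r ≤ x1 + x2 := by linarith
  have hDS : (x1 - x2) * (2*r) ≤ (x1 - x2) * (x1 + x2) :=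
    mul_le_mul_of_nonneg_left hS (le_of_lt hD)
  have h3 : (x1 - x2)^2 * 8 ≤ 1 := by
    nlinarith [mul_nonneg (mul_nonneg hD.le (by linarith : (0:ℝ) ≤ 2*r)) (by linarith : (0:ℝ) ≤ 1 - (x1-x2)*(2*r))]
  nlinarith [sq_nonneg (y1 + y2)]

lemma frame_all (x1 y1 x2 y2 s t : ℝ)
    (hx1 : 0 ≤ x1) (hx2 : 0 ≤ x2) (hy1 : y1^2 ≤ 1) (hy2 : y2^2 ≤ 1)
    (hd1 : 3 ≤ x1^2 + y1^2) (hd2 : 3 ≤ x2^2 + y2^2)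
    (hst : s^2 + t^2 ≤ 1)
    (hE : (x1 - s) * (x2 - s) + (y1 - t) * (y2 - t) ≤ 0)
    (hord : x1^2 + y1^2 ≤ x2^2 + y2^2) :
    x1^2 + y1^2 ≤ 5 ∧ (x1 - x2)^2 + (y1 - y2)^2 + (x1^2 + y1^2) ≤ 11 ∧
      4 + (x1^2 + y1^2 - 3) * (x2^2 + y2^2 - 3) ≤ 4 * (x1*x2 + y1*y2) := by
  set r := Real.sqrt 2 with hrdef
  have hr : r^2 = 2 := Real.sq_sqrt (by norm_num)
  have hr0 : 0 ≤ r := Real.sqrt_nonneg 2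
  have hr1 : 1 < r := by nlinarith
  have ht1 : t^2 ≤ 1 := by nlinarith [sq_nonneg s]
  have hx1r : r ≤ x1 := le_of_sq' r x1 hx1 (by nlinarith)
  have hx2r : r ≤ x2 := le_of_sq' r x2 hx2 (by nlinarith)
  have hyy := key_y y1 y2 t hy1 hy2 ht1
  have hE' : (x1 - s) * (x2 - s) ≤ 1 - t^2 := by linarith
  have hAM : (x1 - s) * (x2 - s) ≤ (y1 - y2)^2 / 4 := by
    nlinarith [sq_nonneg (y1 + y2 - 2*t)]
  have part1 : x1^2 + y1^2 ≤ 5 := by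
    rcases frame_min2 x1 x2 s t hst hE' with h | h
    · nlinarith
    · nlinarith
  refine ⟨part1, ?_, frame_part3 x1 y1 x2 y2 s t r hr hr1 hx1r hx2r hy1 hy2 hd1 hd2 hst hE'⟩
  rcases le_or_gt x1 x2 with hAB | hBA
  · exact frame_part2_caseA x1 y1 x2 y2 s t r hr hr1 hx1r hx2r hy1 hy2 hst hE' hAM hAB
  · exact frame_part2_caseB x1 y1 x2 y2 r hr hr1 hx1r hx2r hy1 hy2 hord part1 hBA


private lemma notOmega_bounds (z : ℂ) (h : z ∉ OmegaSet) :
    3 + 2*z.re ≤ Complex.normSq z ∧ 3 - 2*z.re ≤ Complex.normSq z := by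
  simp only [OmegaSet, Set.mem_union, Set.mem_setOf_eq, not_or, not_lt] at h
  obtain ⟨h1, h2⟩ := h
  have e1 : (4:ℝ) ≤ (‖z-1‖)^2 := by nlinarith [norm_nonneg (z-1)]
  have e2 : (4:ℝ) ≤ (‖z+1‖)^2 := by nlinarith [norm_nonneg (z+1)]
  rw [Complex.sq_norm] at e1 e2
  simp only [Complex.normSq_apply, Complex.sub_re, Complex.sub_im, Complex.add_re,
    Complex.add_im, Complex.one_re, Complex.one_im] at e1 e2 ⊢
  constructor <;> nlinarith

private lemma diamdisc_re (z w u : ℂ)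
    (h : ‖u - (z + w)/2‖ ≤ ‖z - w‖/2) :
    (z.re - u.re)*(w.re - u.re) + (z.im - u.im)*(w.im - u.im) ≤ 0 := by
  have h2 : (‖u - (z+w)/2‖)^2 ≤ (‖z-w‖/2)^2 := by
    have := norm_nonneg (u - (z+w)/2)
    nlinarith
  rw [div_pow, Complex.sq_norm, Complex.sq_norm] at h2
  simp only [Complex.normSq_apply, Complex.sub_re, Complex.sub_im, Complex.add_re,
    Complex.add_im, Complex.div_re, Complex.div_im, Complex.normSq_ofNat,
    Complex.re_ofNat, Complex.im_ofNat] at h2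
  nlinarith [h2]

private lemma sq_le_one_of_abs_le {v : ℝ} (h : |v| ≤ 1) : v^2 ≤ 1 := by
  rw [abs_le] at h; nlinarith [h.1, h.2]

private lemma le_sqrt_of_sq_le {a c : ℝ} (ha : 0 ≤ a) (h : a^2 ≤ c) : a ≤ Real.sqrt c := by
  have hc : 0 ≤ c := le_trans (sq_nonneg a) h
  have hs := Real.sq_sqrt hc
  have hs0 := Real.sqrt_nonneg c
  nlinarith [sq_nonneg (a + Real.sqrt c), sq_nonneg (a - Real.sqrt c)]

private lemma sq_mono {a c : ℝ} (ha : 0 ≤ a) (h : a ≤ c) : a^2 ≤ c^2 := by nlinarith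

private lemma le_of_sq_le_sq' {a b : ℝ} (hb : 0 ≤ b) (h : a^2 ≤ b^2) : a ≤ b := by
  nlinarith [sq_nonneg (a - b), sq_nonneg (a + b)]

private lemma normSq_le_one_of_abs_le {u : ℂ} (h : ‖u‖ ≤ 1) :
    Complex.normSq u ≤ 1 := by
  rw [← Complex.sq_norm]
  nlinarith [norm_nonneg u]

theorem properties_of_intersecting_circles (z₁ z₂ : ℂ)
    (h₁ : z₁ ∉ OmegaSet) (h₂ : z₂ ∉ OmegaSet)
    (hcol : ApproxCollinear z₁ z₂)
    (hint : (DiamDisc z₁ z₂ ∩ {u : ℂ | ‖u‖ ≤ 1}).Nonempty)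
    (hle : ‖z₁‖ ≤ ‖z₂‖) :
    ‖z₁‖ ≤ Real.sqrt 5 ∧
    ‖z₁ - z₂‖ ≤ 2 * Real.sqrt 2 ∧
    (‖z₁ - z₂‖ = 2 * Real.sqrt 2 →
      z₁ = (Real.sqrt 3 : ℂ) * Complex.I ∨ z₁ = -((Real.sqrt 3 : ℂ) * Complex.I)) ∧
    ((0 < z₁.im ∧ 0 < z₂.im) ∨ (z₁.im < 0 ∧ z₂.im < 0)) := by
  obtain ⟨a, ha1, hw1, hw2⟩ := hcol
  obtain ⟨u, hu1, hu2⟩ := hint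
  simp only [DiamDisc, Set.mem_setOf_eq] at hu1 hu2
  have ha0 : a ≠ 0 := by
    intro h; rw [h] at ha1; simp at ha1
  have hnsa : Complex.normSq a = 1 := by
    rw [← Complex.sq_norm, ha1]; norm_num
  set x1 := (z₁/a).re with hx1def
  set y1 := (z₁/a).im with hy1def
  set x2 := (z₂/a).re with hx2def
  set y2 := (z₂/a).im with hy2def
  set s := (u/a).re with hsdef
  set t := (u/a).im with htdef
  have hns1 : Complex.normSq (z₁/a) = Complex.normSq z₁ := by
    rw [Complex.normSq_div, hnsa, div_one]
  have hns2 : Complex.normSq (z₂/a) = Complex.normSq z₂ := by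
    rw [Complex.normSq_div, hnsa, div_one]
  have hnsq1 : x1^2 + y1^2 = Complex.normSq z₁ := by
    rw [← hns1, Complex.normSq_apply]; ring
  have hnsq2 : x2^2 + y2^2 = Complex.normSq z₂ := by
    rw [← hns2, Complex.normSq_apply]; ring
  obtain ⟨hb1, hb1'⟩ := notOmega_bounds z₁ h₁
  obtain ⟨hb2, hb2'⟩ := notOmega_bounds z₂ h₂
  have hx1 : 0 ≤ x1 := hw1.1
  have hx2 : 0 ≤ x2 := hw2.1
  have hy1 : y1^2 ≤ 1 := sq_le_one_of_abs_le hw1.2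
  have hy2 : y2^2 ≤ 1 := sq_le_one_of_abs_le hw2.2
  have habs1 : |z₁.re| ≤ (Complex.normSq z₁ - 3)/2 := by
    rw [abs_le]; constructor <;> linarith
  have habs2 : |z₂.re| ≤ (Complex.normSq z₂ - 3)/2 := by
    rw [abs_le]; constructor <;> linarith
  have hd1 : 3 ≤ x1^2 + y1^2 := by
    rw [hnsq1]; have := abs_nonneg z₁.re; linarith
  have hd2 : 3 ≤ x2^2 + y2^2 := by
    rw [hnsq2]; have := abs_nonneg z₂.re; linarith
  have hst : s^2 + t^2 ≤ 1 := by
    have h := normSq_le_one_of_abs_le hu2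
    have h2 : Complex.normSq (u/a) ≤ 1 := by rw [Complex.normSq_div, hnsa, div_one]; exact h
    rw [Complex.normSq_apply] at h2; linarith [h2]
  have hEc : ‖u/a - ((z₁/a) + (z₂/a))/2‖ ≤ ‖(z₁/a) - (z₂/a)‖/2 := by
    have e1 : u/a - ((z₁/a) + (z₂/a))/2 = (u - (z₁ + z₂)/2)/a := by field_simp
    have e2 : (z₁/a) - (z₂/a) = (z₁ - z₂)/a := by field_simp
    rw [e1, e2, norm_div, norm_div, ha1, div_one, div_one]
    exact hu1
  have hE : (x1 - s) * (x2 - s) + (y1 - t) * (y2 - t) ≤ 0 :=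
    diamdisc_re (z₁/a) (z₂/a) (u/a) hEc
  have hord : x1^2 + y1^2 ≤ x2^2 + y2^2 := by
    rw [hnsq1, hnsq2, ← Complex.sq_norm, ← Complex.sq_norm]
    exact sq_mono (norm_nonneg z₁) hle
  obtain ⟨P1, P2, P3⟩ := frame_all x1 y1 x2 y2 s t hx1 hx2 hy1 hy2 hd1 hd2 hst hE hord
  -- components
  set p := a.re with hpdef
  set q := a.im with hqdef
  have hpq : p^2 + q^2 = 1 := by
    rw [Complex.normSq_apply] at hnsa; linear_combination hnsa
  have hz1e : z₁ = (z₁/a) * a := (div_mul_cancel₀ z₁ ha0).symm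
  have hz2e : z₂ = (z₂/a) * a := (div_mul_cancel₀ z₂ ha0).symm
  have hz1re : z₁.re = x1*p - y1*q := by rw [hz1e]; simp [Complex.mul_re]; rfl
  have hz1im : z₁.im = x1*q + y1*p := by rw [hz1e]; simp [Complex.mul_im]; rfl
  have hz2re : z₂.re = x2*p - y2*q := by rw [hz2e]; simp [Complex.mul_re]; rfl
  have hz2im : z₂.im = x2*q + y2*p := by rw [hz2e]; simp [Complex.mul_im]; rfl
  -- part (iv)
  have hid : z₁.re * z₂.re + z₁.im * z₂.im = x1*x2 + y1*y2 := by
    rw [hz1re, hz1im, hz2re, hz2im]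
    linear_combination (x1*x2 + y1*y2) * hpq
  have hprodabs : |z₁.re| * |z₂.re| ≤ ((Complex.normSq z₁ - 3)/2) * ((Complex.normSq z₂ - 3)/2) :=
    mul_le_mul habs1 habs2 (abs_nonneg _) (by rw [← hnsq1]; linarith)
  have hprod : 4 * (z₁.re * z₂.re) ≤ (Complex.normSq z₁ - 3) * (Complex.normSq z₂ - 3) := by
    have h1 : z₁.re * z₂.re ≤ |z₁.re| * |z₂.re| := by
      rw [← abs_mul]; exact le_abs_self _
    linarith [hprodabs, h1]
  have hY : 1 ≤ z₁.im * z₂.im := by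
    rw [hnsq1, hnsq2] at P3
    linarith [hid, hprod, P3]
  have part4 : (0 < z₁.im ∧ 0 < z₂.im) ∨ (z₁.im < 0 ∧ z₂.im < 0) := by
    rcases lt_trichotomy z₁.im 0 with h | h | h
    · right
      refine ⟨h, ?_⟩
      by_contra hc
      push_neg at hc
      have := mul_nonneg hc (neg_nonneg.mpr h.le)
      linarith [hY, this]
    · exfalso; rw [h, zero_mul] at hY; linarith
    · left
      refine ⟨h, ?_⟩
      by_contra hc
      push_neg at hc
      have := mul_nonneg h.le (neg_nonneg.mpr hc)
      linarith [hY, this]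
  -- part (i)
  have part1 : ‖z₁‖ ≤ Real.sqrt 5 := by
    apply le_sqrt_of_sq_le (norm_nonneg z₁)
    rw [Complex.sq_norm, ← hnsq1]; linarith
  -- part (ii)
  have hns12 : Complex.normSq (z₁ - z₂) = (x1-x2)^2 + (y1-y2)^2 := by
    have e : z₁ - z₂ = ((z₁/a) - (z₂/a)) * a := by field_simp
    rw [e, Complex.normSq_mul, hnsa, mul_one, Complex.normSq_apply]
    simp only [Complex.sub_re, Complex.sub_im]; ring
  have sqrt2 : (Real.sqrt 2)^2 = 2 := Real.sq_sqrt (by norm_num)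
  have h2s2 : (2 * Real.sqrt 2)^2 = 8 := by rw [mul_pow, sqrt2]; norm_num
  have part2 : ‖z₁ - z₂‖ ≤ 2 * Real.sqrt 2 := by
    have hsq : (‖z₁ - z₂‖)^2 ≤ (2 * Real.sqrt 2)^2 := by
      rw [Complex.sq_norm, hns12, h2s2]; linarith
    exact le_of_sq_le_sq' (by positivity) hsq
  refine ⟨part1, part2, ?_, part4⟩
  -- part (iii)
  intro heq
  have h8 : (x1-x2)^2 + (y1-y2)^2 = 8 := by
    have h := Complex.sq_norm (z₁ - z₂)
    rw [heq, h2s2] at h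
    rw [← hns12, h]
  have hd1eq : Complex.normSq z₁ = 3 := by
    rw [← hnsq1]
    have : x1^2 + y1^2 ≤ 3 := by linarith
    linarith
  have hre0 : z₁.re = 0 := by linarith
  have him : z₁.im^2 = 3 := by
    rw [Complex.normSq_apply, hre0] at hd1eq
    linear_combination hd1eq
  have sqrt3 : (Real.sqrt 3)^2 = 3 := Real.sq_sqrt (by norm_num)
  have hcases : z₁.im = Real.sqrt 3 ∨ z₁.im = -Real.sqrt 3 := by
    have hz : (z₁.im - Real.sqrt 3) * (z₁.im + Real.sqrt 3) = 0 := by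
      linear_combination him - sqrt3
    rcases mul_eq_zero.1 hz with h | h
    · left; linarith
    · right; linarith
  rcases hcases with h | h
  · left; apply Complex.ext <;> simp [hre0, h]
  · right; apply Complex.ext <;> simp [hre0, h]
end
end
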